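/- In the Bayesian model with p ≥ 3, the statistic ((p−2)/(n+2))·S²/‖X−ν‖² satisfies E[((p−2)/(n+2))·S²/‖X−ν‖²] = (σ²/(τ²+σ²))·(n/(n+2)), where the expectation is the iterated integral over θ ~ N_p(ν, τ²I_p), X ~ N_p(θ, σ²I_p) and S² = σ²U, U ~ χ²_n. In particular this statistic is an asymptotically unbiased estimator of σ²/(τ²+σ²) as n → ∞. -/

import Mathlib

open MeasureTheory ProbabilityTheory Filter

/-- The chi-square distribution with `m` degrees of freedom: the Gamma distribution
with shape `m/2` and rate `1/2`. -/
noncomputable def chiSq (m : ℕ) : Measure ℝ := gammaMeasure ((m : ℝ) / 2) (1 / 2)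

/-- Expectation of `f` under the chi-square distribution with `m` degrees of freedom. -/
noncomputable def chiSqExp (m : ℕ) (f : ℝ → ℝ) : ℝ := ∫ u, f u ∂(chiSq m)

/-- `N_p(θ, v I_p)`: the measure on `ℝ^p` under which the coordinates are independent
Gaussians, coordinate `i` having mean `θ i` and variance `v`. -/
noncomputable def normalPi (p : ℕ) (θ : Fin p → ℝ) (v : ℝ) : Measure (Fin p → ℝ) :=
  Measure.pi fun i => gaussianReal (θ i) v.toNNReal

/-- Bayes risk of an estimator `δ(X, S²)` in the model
`θ ~ N_p(ν, τ²I_p)`, `X | θ ~ N_p(θ, σ²I_p)`, `S² = σ²U` with `U ~ χ²_n`,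
as the iterated integral `E_θ E_{S²} E_{X|θ} ‖δ(X,S²) − θ‖²`
(the squared Euclidean norm being the sum of squared coordinates). -/
noncomputable def bayesRisk (p n : ℕ) (ν : Fin p → ℝ) (τ2 σ2 : ℝ)
    (δ : (Fin p → ℝ) → ℝ → Fin p → ℝ) : ℝ :=
  ∫ θ, ∫ u, ∫ x, (∑ i, (δ x (σ2 * u) i - θ i) ^ 2) ∂(normalPi p θ σ2)
    ∂(chiSq n) ∂(normalPi p ν τ2)

/-- The Modified Bayes estimator `δ*_B(X,S²) = (1 − S²/(S²+nτ²))(X−ν) + ν`. -/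
noncomputable def modBayes (p n : ℕ) (ν : Fin p → ℝ) (τ2 : ℝ) :
    (Fin p → ℝ) → ℝ → Fin p → ℝ :=
  fun x s2 i => (1 - s2 / (s2 + n * τ2)) * (x i - ν i) + ν i

/-- The general shrinkage estimator `δ*c(X,S²) = (1 − c·S²/‖X−ν‖²)(X−ν) + ν`. -/
noncomputable def shrinkEst (p : ℕ) (ν : Fin p → ℝ) (c : ℝ) :
    (Fin p → ℝ) → ℝ → Fin p → ℝ :=
  fun x s2 i => (1 - c * s2 / (∑ j, (x j - ν j) ^ 2)) * (x i - ν i) + ν i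

/-- The Empirical Modified Bayes estimator
`δ*_EB(X,S²) = (1 − ((p−2)/(n+2))·S²/‖X−ν‖²)(X−ν) + ν`. -/
noncomputable def empModBayes (p n : ℕ) (ν : Fin p → ℝ) :
    (Fin p → ℝ) → ℝ → Fin p → ℝ :=
  shrinkEst p ν (((p : ℝ) - 2) / ((n : ℝ) + 2))

open Set
open scoped ENNReal NNReal

/-!
Integrating out `θ`, `X − ν ~ N_p(0, (τ² + σ²) I_p)` because Gaussians convolve to Gaussians,
and `E S² = n σ²`. The inverse moment of `Z ~ N_p(0, V I_p)` comes from the Laplace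
representation `‖z‖⁻² = ∫₀^∞ e^{-t‖z‖²} dt` and Tonelli: `E e^{-t‖Z‖²} = (1 + 2Vt)^{-p/2}`,
whose integral over `(0, ∞)` is `1 / ((p − 2) V)`, finite exactly when `p ≥ 3`. Hence the
expectation is `(p − 2)/(n + 2) · n σ² / ((p − 2)(τ² + σ²))`.
-/

lemma integral_id_gammaMeasure {a r : ℝ} (ha : 0 < a) (hr : 0 < r) :
    ∫ x, x ∂gammaMeasure a r = a / r := by
  have hdens : ∀ x, (gammaPDF a r x).toReal = gammaPDFReal a r x := fun x =>
    ENNReal.toReal_ofReal (gammaPDFReal_nonneg ha hr x)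
  rw [gammaMeasure, integral_withDensity_eq_integral_toReal_smul (f := gammaPDF a r)
    (measurable_gammaPDFReal a r).ennreal_ofReal (ae_of_all _ fun _ => ENNReal.ofReal_lt_top)]
  simp_rw [hdens, smul_eq_mul]
  rw [← setIntegral_eq_integral_of_forall_compl_eq_zero (s := Ioi 0) fun x hx => by
    rcases (not_lt.mp (show ¬ 0 < x from hx)).lt_or_eq with hx | rfl
    · simp [gammaPDFReal, not_le.mpr hx]
    · simp]
  have hpdf : ∀ x ∈ Ioi (0 : ℝ), gammaPDFReal a r x * x
      = r ^ a / Real.Gamma a * (x ^ (a + 1 - 1) * Real.exp (-(r * x))) := fun x (hx : 0 < x) => by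
    rw [gammaPDFReal, if_pos hx.le, add_sub_cancel_right, Real.rpow_sub_one hx.ne']
    field_simp
  rw [setIntegral_congr_fun measurableSet_Ioi hpdf, integral_const_mul,
    Real.integral_rpow_mul_exp_neg_mul_Ioi (by linarith) hr, Real.Gamma_add_one ha.ne',
    Real.rpow_add_one (by positivity)]
  have := Real.Gamma_pos_of_pos ha
  field_simp
  rw [Real.div_rpow zero_le_one hr.le, Real.one_rpow]
  field_simp

lemma integral_id_chiSq {n : ℕ} (hn : 0 < n) : ∫ u, u ∂chiSq n = n := by
  rw [chiSq, integral_id_gammaMeasure (by positivity) one_half_pos]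
  ring

lemma ofReal_inv_eq_lintegral_exp {q : ℝ} (hq : 0 < q) :
    ENNReal.ofReal q⁻¹ = ∫⁻ t in Ioi 0, ENNReal.ofReal (Real.exp (-(t * q))) := by
  have hexp : ∀ t, Real.exp (-(t * q)) = Real.exp (-q * t) := fun t => by ring_nf
  simp_rw [hexp]
  rw [← ofReal_integral_eq_lintegral_ofReal (exp_neg_integrableOn_Ioi 0 hq)
    (ae_of_all _ fun _ => Real.exp_nonneg _), integral_exp_mul_Ioi (neg_lt_zero.mpr hq)]
  simp

lemma lintegral_Ioi_one_add_mul_rpow_neg {b c : ℝ} (hb : 1 < b) (hc : 0 < c) :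
    ∫⁻ t in Ioi 0, ENNReal.ofReal ((1 + c * t) ^ (-b)) = ENNReal.ofReal (((b - 1) * c)⁻¹) := by
  set F : ℝ → ℝ := fun t => -((1 + c * t) ^ (-(b - 1)) / ((b - 1) * c))
  have hderiv : ∀ t ∈ Ici (0 : ℝ), HasDerivAt F ((1 + c * t) ^ (-b)) t := fun t ht => by
    have hpos : 0 < 1 + c * t := by have : (0:ℝ) ≤ t := ht; positivity
    have hF := ((((hasDerivAt_id t).const_mul c).const_add 1).rpow_const
      (p := -(b - 1)) (Or.inl hpos.ne')).div_const ((b - 1) * c) |>.neg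
    refine hF.congr_deriv ?_
    have : b - 1 ≠ 0 := by linarith
    rw [id, show -(b - 1) - 1 = -b by ring]
    field_simp
  have hlim : Tendsto F atTop (nhds 0) := by
    have h1 : Tendsto (fun t => 1 + c * t) atTop atTop :=
      tendsto_atTop_add_const_left _ 1 (tendsto_id.const_mul_atTop hc)
    simpa [F] using ((tendsto_rpow_neg_atTop (by linarith : 0 < b - 1)).comp h1).div_const
      ((b - 1) * c) |>.neg
  have hnonneg : ∀ t ∈ Ioi (0 : ℝ), 0 ≤ (1 + c * t) ^ (-b) := fun t (ht : 0 < t) =>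
    Real.rpow_nonneg (by positivity) _
  rw [← ofReal_integral_eq_lintegral_ofReal (integrableOn_Ioi_deriv_of_nonneg' hderiv hnonneg hlim)
    ((ae_restrict_mem measurableSet_Ioi).mono hnonneg),
    integral_Ioi_of_hasDerivAt_of_nonneg' hderiv hnonneg hlim]
  simp [F]

lemma integral_exp_neg_mul_sq_sub_gaussianReal (m : ℝ) {v : ℝ≥0} (hv : v ≠ 0) {t : ℝ}
    (ht : 0 ≤ t) :
    ∫ x, Real.exp (-(t * (x - m) ^ 2)) ∂gaussianReal m v = (1 + 2 * v * t) ^ (-(1 / 2 : ℝ)) := by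
  have hv' : (0 : ℝ) < v := by positivity
  set b : ℝ := t + (2 * (v : ℝ))⁻¹ with hb_def
  have hb : 0 < b := by positivity
  have hdens : ∀ x, gaussianPDFReal m v x • Real.exp (-(t * (x - m) ^ 2))
      = (√(2 * Real.pi * v))⁻¹ * Real.exp (-b * (x - m) ^ 2) := fun x => by
    rw [gaussianPDFReal, smul_eq_mul, mul_assoc, ← Real.exp_add]
    congr 2
    rw [hb_def]
    field_simp
    ring
  rw [integral_gaussianReal_eq_integral_smul hv]
  simp_rw [hdens]
  rw [integral_const_mul, integral_sub_right_eq_self (fun x => Real.exp (-b * x ^ 2)),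
    integral_gaussian, ← Real.sqrt_inv, ← Real.sqrt_mul (by positivity), Real.sqrt_eq_rpow,
    Real.rpow_neg (by positivity), ← Real.inv_rpow (by positivity)]
  congr 1
  rw [hb_def]
  field_simp
  ring

instance (p : ℕ) (θ : Fin p → ℝ) (v : ℝ) : IsProbabilityMeasure (normalPi p θ v) := by
  unfold normalPi; infer_instance

lemma normalPi_map_add_const {p : ℕ} (m θ : Fin p → ℝ) (v : ℝ) :
    (normalPi p m v).map (· + θ) = normalPi p (m + θ) v := by
  have := Measure.pi_map_pi (μ := fun i => gaussianReal (m i) v.toNNReal)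
    (f := fun i (y : ℝ) => y + θ i) fun i => (measurable_add_const (θ i)).aemeasurable
  simp_rw [gaussianReal_map_add_const] at this
  exact this

lemma normalPi_conv {p : ℕ} (a b : Fin p → ℝ) {v w : ℝ} (hv : 0 ≤ v) (hw : 0 ≤ w) :
    normalPi p a v ∗ normalPi p b w = normalPi p (a + b) (v + w) := by
  set μ := fun i => gaussianReal (a i) v.toNNReal
  set ν := fun i => gaussianReal (b i) w.toNNReal
  have hconv : ∀ i, ((μ i).prod (ν i)).map (fun z : ℝ × ℝ => z.1 + z.2)
      = gaussianReal (a i + b i) (v + w).toNNReal := fun i => by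
    rw [Real.toNNReal_add hv hw, ← gaussianReal_conv_gaussianReal]
    rfl
  have hpi := Measure.pi_map_pi (μ := fun i => (μ i).prod (ν i))
    (f := fun i (z : ℝ × ℝ) => z.1 + z.2) fun i => measurable_add.aemeasurable
  simp_rw [hconv] at hpi
  rw [Measure.conv, normalPi, normalPi,
    ← (measurePreserving_arrowProdEquivProdArrow ℝ ℝ (Fin p) μ ν).map_eq,
    Measure.map_map (by fun_prop) (MeasurableEquiv.measurable _)]
  exact hpi

lemma lintegral_normalPi_eq_lintegral_add {p : ℕ} {f : (Fin p → ℝ) → ℝ≥0∞} (hf : Measurable f)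
    (θ : Fin p → ℝ) (v : ℝ) :
    ∫⁻ x, f x ∂normalPi p θ v = ∫⁻ y, f (y + θ) ∂normalPi p 0 v := by
  rw [← lintegral_map hf (measurable_add_const θ), normalPi_map_add_const, zero_add]

lemma measurable_lintegral_normalPi {p : ℕ} {f : (Fin p → ℝ) → ℝ≥0∞} (hf : Measurable f) (v : ℝ) :
    Measurable fun θ => ∫⁻ x, f x ∂normalPi p θ v := by
  simp_rw [lintegral_normalPi_eq_lintegral_add hf]
  exact (hf.comp measurable_add).lintegral_prod_left'

lemma lintegral_lintegral_normalPi {p : ℕ} {f : (Fin p → ℝ) → ℝ≥0∞} (hf : Measurable f)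
    (ν : Fin p → ℝ) {τ2 σ2 : ℝ} (hτ2 : 0 ≤ τ2) (hσ2 : 0 ≤ σ2) :
    ∫⁻ θ, ∫⁻ x, f x ∂normalPi p θ σ2 ∂normalPi p ν τ2 = ∫⁻ x, f x ∂normalPi p ν (τ2 + σ2) := by
  simp_rw [lintegral_normalPi_eq_lintegral_add hf _ σ2]
  have hconv : normalPi p ν τ2 ∗ normalPi p 0 σ2 = normalPi p ν (τ2 + σ2) := by
    rw [normalPi_conv ν 0 hτ2 hσ2, add_zero]
  rw [← hconv, Measure.lintegral_conv hf]
  simp_rw [add_comm]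

lemma integral_integral_normalPi_of_nonneg {p : ℕ} {f : (Fin p → ℝ) → ℝ} (hf : Measurable f)
    (hf0 : 0 ≤ f) (ν : Fin p → ℝ) {τ2 σ2 : ℝ} (hτ2 : 0 ≤ τ2) (hσ2 : 0 ≤ σ2)
    (hfin : ∫⁻ x, ENNReal.ofReal (f x) ∂normalPi p ν (τ2 + σ2) ≠ ∞) :
    ∫ θ, ∫ x, f x ∂normalPi p θ σ2 ∂normalPi p ν τ2 = ∫ x, f x ∂normalPi p ν (τ2 + σ2) := by
  have hlint : ∀ μ : Measure (Fin p → ℝ), ∫ x, f x ∂μ = (∫⁻ x, ENNReal.ofReal (f x) ∂μ).toReal :=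
    fun μ => integral_eq_lintegral_of_nonneg_ae (ae_of_all _ hf0) hf.aestronglyMeasurable
  have hmeas := measurable_lintegral_normalPi hf.ennreal_ofReal σ2
  simp_rw [hlint]
  rw [integral_toReal hmeas.aemeasurable, lintegral_lintegral_normalPi hf.ennreal_ofReal ν hτ2 hσ2]
  refine ae_lt_top hmeas ?_
  rwa [lintegral_lintegral_normalPi hf.ennreal_ofReal ν hτ2 hσ2]

lemma nullSingletonClass_normalPi {p : ℕ} (hp : 0 < p) (θ : Fin p → ℝ) {v : ℝ} (hv : 0 < v) :
    NullSingletonClass (normalPi p θ v) := by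
  have : Nonempty (Fin p) := ⟨⟨0, hp⟩⟩
  have := fun i => nullSingletonClass_gaussianReal (μ := θ i) (Real.toNNReal_pos.mpr hv).ne'
  exact Measure.pi_nullSingletonClass'

lemma integral_exp_neg_mul_sqDist_normalPi {p : ℕ} (m : Fin p → ℝ) {v : ℝ} (hv : 0 < v) {t : ℝ}
    (ht : 0 ≤ t) :
    ∫ x, Real.exp (-(t * ∑ j, (x j - m j) ^ 2)) ∂normalPi p m v
      = (1 + 2 * v * t) ^ (-((p : ℝ) / 2)) := by
  have hprod : ∀ x : Fin p → ℝ, Real.exp (-(t * ∑ j, (x j - m j) ^ 2))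
      = ∏ j, Real.exp (-(t * (x j - m j) ^ 2)) := fun x => by
    rw [← Real.exp_sum, Finset.mul_sum, Finset.sum_neg_distrib]
  simp_rw [hprod]
  rw [normalPi, integral_fintype_prod_eq_prod (fun j y => Real.exp (-(t * (y - m j) ^ 2)))]
  simp_rw [integral_exp_neg_mul_sq_sub_gaussianReal _ (Real.toNNReal_pos.mpr hv).ne' ht,
    Real.coe_toNNReal _ hv.le]
  rw [Finset.prod_const, Finset.card_univ, Fintype.card_fin, ← Real.rpow_natCast,
    ← Real.rpow_mul (by positivity)]
  ring_nf

lemma lintegral_inv_sqDist_normalPi {p : ℕ} (hp : 3 ≤ p) (m : Fin p → ℝ) {v : ℝ} (hv : 0 < v) :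
    ∫⁻ x, ENNReal.ofReal (∑ j, (x j - m j) ^ 2)⁻¹ ∂normalPi p m v
      = ENNReal.ofReal (((p - 2) * v)⁻¹) := by
  have := nullSingletonClass_normalPi (by omega) m hv
  have hlaplace : ∀ᵐ x ∂normalPi p m v, ENNReal.ofReal (∑ j, (x j - m j) ^ 2)⁻¹
      = ∫⁻ t in Ioi 0, ENNReal.ofReal (Real.exp (-(t * ∑ j, (x j - m j) ^ 2))) := by
    filter_upwards [measure_singleton m |> measure_eq_zero_iff_ae_notMem.mp] with x hx
    refine ofReal_inv_eq_lintegral_exp (Finset.sum_pos' (fun j _ => sq_nonneg _) ?_)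
    obtain ⟨j, hj⟩ := Function.ne_iff.mp hx
    exact ⟨j, Finset.mem_univ j, sq_pos_of_ne_zero (sub_ne_zero.mpr hj)⟩
  have hmgf : ∀ t ∈ Ioi (0 : ℝ),
      ∫⁻ x, ENNReal.ofReal (Real.exp (-(t * ∑ j, (x j - m j) ^ 2))) ∂normalPi p m v
        = ENNReal.ofReal ((1 + 2 * v * t) ^ (-((p : ℝ) / 2))) := fun t (ht : 0 < t) => by
    rw [← integral_exp_neg_mul_sqDist_normalPi m hv ht.le, ofReal_integral_eq_lintegral_ofReal]
    · refine (integrable_const 1).mono' (Measurable.aestronglyMeasurable (by fun_prop))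
        (ae_of_all _ fun x => ?_)
      rw [Real.norm_of_nonneg (Real.exp_nonneg _), Real.exp_le_one_iff, neg_nonpos]
      positivity
    · exact ae_of_all _ fun _ => Real.exp_nonneg _
  have hp' : (3 : ℝ) ≤ p := by exact_mod_cast hp
  rw [lintegral_congr_ae hlaplace, lintegral_lintegral_swap (by fun_prop),
    setLIntegral_congr_fun measurableSet_Ioi hmgf,
    lintegral_Ioi_one_add_mul_rpow_neg (by linarith) (by positivity)]
  congr 2
  ring

lemma integral_integral_inv_sqDist_normalPi {p : ℕ} (hp : 3 ≤ p) (ν : Fin p → ℝ) {τ2 σ2 : ℝ}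
    (hτ2 : 0 < τ2) (hσ2 : 0 < σ2) :
    ∫ θ, ∫ x, (∑ j, (x j - ν j) ^ 2)⁻¹ ∂normalPi p θ σ2 ∂normalPi p ν τ2
      = ((p - 2) * (τ2 + σ2))⁻¹ := by
  have hmoment := lintegral_inv_sqDist_normalPi hp ν (add_pos hτ2 hσ2)
  have hp' : (3 : ℝ) ≤ p := by exact_mod_cast hp
  rw [integral_integral_normalPi_of_nonneg (by fun_prop) (fun x => by positivity) ν hτ2.le hσ2.le
    (hmoment ▸ ENNReal.ofReal_ne_top), integral_eq_lintegral_of_nonneg_ae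
    (ae_of_all _ fun x => by positivity) (Measurable.aestronglyMeasurable (by fun_prop)), hmoment,
    ENNReal.toReal_ofReal (inv_nonneg.mpr (by nlinarith))]

lemma integral_shrinkage_statistic {p n : ℕ} (hp : 3 ≤ p) (hn : 0 < n) (ν : Fin p → ℝ) {τ2 σ2 : ℝ}
    (hτ2 : 0 < τ2) (hσ2 : 0 < σ2) :
    ∫ θ, ∫ u, ∫ x, ((p : ℝ) - 2) / ((n : ℝ) + 2) * (σ2 * u) / (∑ j, (x j - ν j) ^ 2)
        ∂normalPi p θ σ2 ∂chiSq n ∂normalPi p ν τ2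
      = σ2 / (τ2 + σ2) * ((n : ℝ) / ((n : ℝ) + 2)) := by
  have hθ : ∀ θ, ∫ u, ∫ x, ((p : ℝ) - 2) / ((n : ℝ) + 2) * (σ2 * u) / (∑ j, (x j - ν j) ^ 2)
        ∂normalPi p θ σ2 ∂chiSq n
      = ((p : ℝ) - 2) / ((n : ℝ) + 2) * σ2 * n
          * ∫ x, (∑ j, (x j - ν j) ^ 2)⁻¹ ∂normalPi p θ σ2 := fun θ => by
    simp_rw [div_eq_mul_inv, integral_const_mul]
    rw [integral_mul_const, integral_const_mul, integral_const_mul, integral_id_chiSq hn]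
    ring
  simp_rw [hθ]
  rw [integral_const_mul, integral_integral_inv_sqDist_normalPi hp ν hτ2 hσ2]
  have hp' : (3 : ℝ) ≤ p := by exact_mod_cast hp
  have : (p : ℝ) - 2 ≠ 0 := by linarith
  field_simp

theorem stmt_9 (p : ℕ) (hp : 3 ≤ p) (ν : Fin p → ℝ) (τ2 σ2 : ℝ)
    (hτ2 : 0 < τ2) (hσ2 : 0 < σ2) :
    (∀ n : ℕ, 1 ≤ n →
      (∫ θ, ∫ u, ∫ x, (((p : ℝ) - 2) / ((n : ℝ) + 2)) * (σ2 * u) / (∑ j, (x j - ν j) ^ 2)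
          ∂(normalPi p θ σ2) ∂(chiSq n) ∂(normalPi p ν τ2)) =
        σ2 / (τ2 + σ2) * ((n : ℝ) / ((n : ℝ) + 2))) ∧
    Tendsto (fun n : ℕ =>
        ∫ θ, ∫ u, ∫ x, (((p : ℝ) - 2) / ((n : ℝ) + 2)) * (σ2 * u) / (∑ j, (x j - ν j) ^ 2)
          ∂(normalPi p θ σ2) ∂(chiSq n) ∂(normalPi p ν τ2))
      atTop (nhds (σ2 / (τ2 + σ2))) := by
  have hmean := fun n (hn : 1 ≤ n) => integral_shrinkage_statistic hp hn ν hτ2 hσ2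
  refine ⟨hmean, ?_⟩
  have hlim : Tendsto (fun n : ℕ => σ2 / (τ2 + σ2) * ((n : ℝ) / ((n : ℝ) + 2))) atTop
      (nhds (σ2 / (τ2 + σ2))) := by
    simpa using (tendsto_natCast_div_add_atTop (2 : ℝ)).const_mul (σ2 / (τ2 + σ2))
  exact hlim.congr' ((eventually_ge_atTop 1).mono fun n hn => (hmean n hn).symm)
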